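/- As ε → 0+, for 0 ≤ j ≤ m-1, the weight φ_{q,1-ε,ν(1-ε)}(j|m) has the expansion φ_{q,1-ε,ν(1-ε)}(j|m) = ψ•_{q,ν}(j|m)·ε + O(ε²), where ψ•_{q,ν}(j|m) = 1/(1-q^{m-j}) · (q;q)_m (ν;q)_j / ((q;q)_j (ν;q)_m); and φ_{q,1-ε,ν(1-ε)}(m|m) = 1 + O(ε). -/

import Mathlib

open Finset Filter Asymptotics

/-- The q-Pochhammer symbol `(x;q)_k = ∏_{i=0}^{k-1} (1 - q^i x)`. -/
noncomputable def qPoch (q x : ℝ) (k : ℕ) : ℝ := ∏ i ∈ Finset.range k, (1 - q ^ i * x)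

/-- The q-deformed beta-binomial weight `φ_{q,μ,ν}(j|m)`. -/
noncomputable def qHahnPhi (q μ ν : ℝ) (j m : ℕ) : ℝ :=
  μ ^ j * (qPoch q (ν / μ) j * qPoch q μ (m - j)) / qPoch q ν m *
    (qPoch q q m / (qPoch q q j * qPoch q q (m - j)))

/-- The rate `ψ•_{q,ν}(j|m) = 1/(1-q^{m-j}) · (q;q)_m (ν;q)_j/((q;q)_j (ν;q)_m)`. -/
noncomputable def qHahnPsiDot (q ν : ℝ) (j m : ℕ) : ℝ :=
  1 / (1 - q ^ (m - j)) * (qPoch q q m * qPoch q ν j) / (qPoch q q j * qPoch q ν m)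

/-!
Writing `μ = 1 - ε`, the ratio `ν μ / μ = ν` no longer depends on `ε`, and for `j < m` the first
factor of `(1 - ε; q)_{m-j}` is `ε` itself. Hence `φ_{q,1-ε,ν(1-ε)}(j|m) = ε H(ε)` with `H`
differentiable at `0` and `H(0) = ψ•_{q,ν}(j|m)`, so `φ - ψ• ε = ε (H(ε) - H(0)) = O(ε²)`.
For `j = m` the weight is a differentiable function of `ε` equal to `1` at `ε = 0`.
-/

noncomputable def qBinom (q : ℝ) (m j : ℕ) : ℝ := qPoch q q m / (qPoch q q j * qPoch q q (m - j))

lemma qPoch_pos {q x : ℝ} (hq : |q| ≤ 1) (hx : |x| < 1) (k : ℕ) : 0 < qPoch q x k :=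
  prod_pos fun i _ => by
    have : |q ^ i * x| < 1 := by
      rw [abs_mul, abs_pow]
      calc |q| ^ i * |x| ≤ 1 * |x| := by gcongr; exact pow_le_one₀ (abs_nonneg q) hq
        _ < 1 := by linarith
    linarith [le_abs_self (q ^ i * x)]

lemma qPoch_zero (q x : ℝ) : qPoch q x 0 = 1 := prod_range_zero _

lemma qPoch_succ (q x : ℝ) (n : ℕ) : qPoch q x (n + 1) = qPoch q x n * (1 - q ^ n * x) :=
  prod_range_succ _ _

lemma qPoch_succ' (q x : ℝ) (n : ℕ) : qPoch q x (n + 1) = (1 - x) * qPoch q (q * x) n := by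
  simp only [qPoch, prod_range_succ', pow_zero, one_mul, pow_succ, mul_assoc]
  ring

@[fun_prop]
lemma differentiable_qPoch (q : ℝ) (k : ℕ) : Differentiable ℝ fun x => qPoch q x k := by
  unfold qPoch
  fun_prop

lemma qHahnPhi_mul_right {q μ : ℝ} (ν : ℝ) (hμ : μ ≠ 0) (j m : ℕ) :
    qHahnPhi q μ (ν * μ) j m =
      μ ^ j * (qPoch q ν j * qPoch q μ (m - j)) / qPoch q (ν * μ) m * qBinom q m j := by
  rw [qHahnPhi, mul_div_cancel_right₀ ν hμ, qBinom]

lemma isBigO_mul_sub_mul_of_differentiableAt {f : ℝ → ℝ} (hf : DifferentiableAt ℝ f 0) :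
    (fun ε => ε * f ε - f 0 * ε) =O[nhds 0] fun ε => ε ^ 2 := by
  have h := (isBigO_refl (fun ε : ℝ => ε) (nhds 0)).mul hf.isBigO_sub
  simp only [sub_zero] at h
  exact h.congr (fun ε => by ring) (fun ε => by ring)

section MuNearOne

variable {q ν : ℝ}

lemma qHahnPhi_one_sub_sub_qHahnPsiDot_isBigO (hq : |q| < 1) (hν : |ν| < 1) (j n : ℕ) :
    (fun ε : ℝ => qHahnPhi q (1 - ε) (ν * (1 - ε)) j (j + n + 1) -
        qHahnPsiDot q ν j (j + n + 1) * ε) =O[nhds 0] fun ε => ε ^ 2 := by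
  have hqq (k : ℕ) : qPoch q q k ≠ 0 := (qPoch_pos hq.le hq k).ne'
  have hνν (k : ℕ) : qPoch q ν k ≠ 0 := (qPoch_pos hq.le hν k).ne'
  have hmj : j + n + 1 - j = n + 1 := by omega
  set H : ℝ → ℝ := fun ε => (1 - ε) ^ j * (qPoch q ν j * qPoch q (q * (1 - ε)) n) /
    qPoch q (ν * (1 - ε)) (j + n + 1) * qBinom q (j + n + 1) j
  have hφ : ∀ ε ≠ 1, qHahnPhi q (1 - ε) (ν * (1 - ε)) j (j + n + 1) = ε * H ε := fun ε hε => by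
    rw [qHahnPhi_mul_right ν (sub_ne_zero.mpr hε.symm), hmj, qPoch_succ', sub_sub_cancel]
    ring
  have hH0 : H 0 = qHahnPsiDot q ν j (j + n + 1) := by
    have hsplit : qPoch q q (n + 1) = qPoch q q n * (1 - q ^ (n + 1)) := by
      rw [qPoch_succ, pow_succ]
    have hlast : 1 - q ^ (n + 1) ≠ 0 := fun h => hqq (n + 1) (by rw [hsplit, h, mul_zero])
    simp only [H, qHahnPsiDot, qBinom, hmj, hsplit, sub_zero, mul_one, one_pow, one_mul]
    field_simp [hqq, hνν, hlast]
  have hH : DifferentiableAt ℝ H 0 := by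
    have : qPoch q (ν * (1 - 0)) (j + n + 1) ≠ 0 := by simpa using hνν _
    fun_prop (disch := exact this)
  rw [← hH0]
  refine (isBigO_mul_sub_mul_of_differentiableAt hH).congr' ?_ EventuallyEq.rfl
  filter_upwards [eventually_ne_nhds (zero_ne_one' ℝ)] with ε hε
  rw [hφ ε hε]

lemma qHahnPhi_one_sub_diag_sub_one_isBigO (hq : |q| < 1) (hν : |ν| < 1) (m : ℕ) :
    (fun ε : ℝ => qHahnPhi q (1 - ε) (ν * (1 - ε)) m m - 1) =O[nhds 0] fun ε => ε := by
  set G : ℝ → ℝ := fun ε => (1 - ε) ^ m * qPoch q ν m / qPoch q (ν * (1 - ε)) m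
  have hφ : ∀ ε ≠ 1, qHahnPhi q (1 - ε) (ν * (1 - ε)) m m = G ε := fun ε hε => by
    have hbinom : qBinom q m m = 1 := by
      rw [qBinom, Nat.sub_self, qPoch_zero, mul_one, div_self (qPoch_pos hq.le hq m).ne']
    rw [qHahnPhi_mul_right ν (sub_ne_zero.mpr hε.symm), Nat.sub_self, qPoch_zero, hbinom]
    ring
  have hν0 : qPoch q (ν * (1 - 0)) m ≠ 0 := by simpa using (qPoch_pos hq.le hν m).ne'
  have hG0 : G 0 = 1 := by
    simp only [G, sub_zero, one_pow, one_mul, mul_one] at hν0 ⊢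
    exact div_self hν0
  have hG : DifferentiableAt ℝ G 0 := by fun_prop (disch := exact hν0)
  have h := hG.isBigO_sub
  simp only [hG0, sub_zero] at h
  refine h.congr' ?_ EventuallyEq.rfl
  filter_upwards [eventually_ne_nhds (zero_ne_one' ℝ)] with ε hε
  rw [hφ ε hε]

end MuNearOne

/-- As `ε → 0+`: `φ_{q,1-ε,ν(1-ε)}(j|m) = ψ•_{q,ν}(j|m)·ε + O(ε²)` for `0 ≤ j ≤ m-1`, and
`φ_{q,1-ε,ν(1-ε)}(m|m) = 1 + O(ε)`. -/
theorem qHahnPhi_expansion_mu_near_one (q ν : ℝ) (hq0 : 0 < q) (hq1 : q < 1)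
    (hν0 : 0 ≤ ν) (hν1 : ν < 1) (m : ℕ) :
    (∀ j : ℕ, j ≤ m - 1 → j < m →
      (fun ε : ℝ => qHahnPhi q (1 - ε) (ν * (1 - ε)) j m - qHahnPsiDot q ν j m * ε)
        =O[nhdsWithin 0 (Set.Ioi 0)] fun ε : ℝ => ε ^ 2) ∧
    ((fun ε : ℝ => qHahnPhi q (1 - ε) (ν * (1 - ε)) m m - 1)
        =O[nhdsWithin 0 (Set.Ioi 0)] fun ε : ℝ => ε) := by
  have hq : |q| < 1 := abs_lt.mpr ⟨by linarith, hq1⟩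
  have hν : |ν| < 1 := abs_lt.mpr ⟨by linarith, hν1⟩
  refine ⟨fun j _ hj => ?_, (qHahnPhi_one_sub_diag_sub_one_isBigO hq hν m).mono nhdsWithin_le_nhds⟩
  obtain ⟨n, rfl⟩ : ∃ n, m = j + n + 1 := ⟨m - j - 1, by omega⟩
  exact (qHahnPhi_one_sub_sub_qHahnPsiDot_isBigO hq hν j n).mono nhdsWithin_le_nhds
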